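/- If |||·||| is a norm on c₀₀ with |||eᵢ||| = 1 for all i, satisfying the implicit equation |||x||| = max{ |x|₀, sup over ℓ≥2, E₁<⋯<E_ℓ of (1/f(ℓ))·Σᵢ |||Eᵢ(x)||| } for all x ∈ c₀₀, then |||·||| coincides with the Schlumprecht norm ‖·‖ (the unique solution); the proof is by induction on the cardinality of the support of x. -/

import Mathlib

open scoped Classical

noncomputable def f (l : ℕ) : ℝ := Real.logb 2 (l + 1)

/-- `E₁ < E₂ < ⋯` : the finite sets are successive. -/
def Succ {l : ℕ} (E : Fin l → Finset ℕ) : Prop :=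
  ∀ i j : Fin l, i < j → ∀ a ∈ E i, ∀ b ∈ E j, a < b

/-- Restriction `E(x)` of `x` to the finite set `E`. -/
noncomputable def restr (x : ℕ →₀ ℝ) (E : Finset ℕ) : ℕ →₀ ℝ :=
  x.filter (· ∈ E)

/-- The inductively defined norms `|·|_k`. -/
noncomputable def normK : ℕ → (ℕ →₀ ℝ) → ℝ
  | 0, x => ⨆ n, |x n|
  | k + 1, x => ⨆ l : ℕ, ⨆ E : Fin (l + 1) → Finset ℕ,
      if Succ E then (1 / f (l + 1)) * ∑ i, normK k (restr x (E i)) else 0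

/-- The Schlumprecht norm `‖x‖ = sup_k |x|_k`. -/
noncomputable def S (x : ℕ →₀ ℝ) : ℝ := ⨆ k, normK k x

/-- The right-hand side of the implicit equation for a functional `N` on `c₀₀`. -/
noncomputable def implicitRHS (N : (ℕ →₀ ℝ) → ℝ) (x : ℕ →₀ ℝ) : ℝ :=
  max (⨆ n, |x n|)
    (⨆ l : ℕ, ⨆ E : Fin l → Finset ℕ,
      if 2 ≤ l ∧ Succ E then (1 / f l) * ∑ i, N (restr x (E i)) else 0)

/-! ### basic facts on f -/

lemma f_pos {l : ℕ} (h : 1 ≤ l) : 0 < f l := by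
  have : (0:ℝ) = Real.logb 2 1 := by simp
  rw [f, this]
  apply Real.logb_lt_logb (by norm_num) (by norm_num)
  have : (1:ℝ) ≤ l := by exact_mod_cast h
  linarith

lemma f_one_le {l : ℕ} (h : 1 ≤ l) : 1 ≤ f l := by
  have h2 : Real.logb 2 2 ≤ Real.logb 2 (l+1) := by
    apply Real.logb_le_logb_of_le (by norm_num) (by norm_num)
    have : (1:ℝ) ≤ l := by exact_mod_cast h
    linarith
  have h3 : Real.logb 2 2 = 1 := Real.logb_self_eq_one (by norm_num)
  rw [f]; linarith

lemma f_mono {l m : ℕ} (hl : 1 ≤ l) (h : l ≤ m) : f l ≤ f m := by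
  apply Real.logb_le_logb_of_le (by norm_num) (by positivity)
  have : (l:ℝ) ≤ m := by exact_mod_cast h
  linarith

lemma f_two_gt_one : 1 < f 2 := by
  have h3 : Real.logb 2 2 = 1 := Real.logb_self_eq_one (by norm_num)
  have : Real.logb 2 2 < Real.logb 2 3 := Real.logb_lt_logb (by norm_num) (by norm_num) (by norm_num)
  have h4 : ((2:ℕ):ℝ) + 1 = 3 := by norm_num
  rw [f, h4]; linarith

lemma inv_f_le_one {l : ℕ} (h : 1 ≤ l) : 1 / f l ≤ 1 := by
  rw [div_le_one (f_pos h)]; exact f_one_le h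

/-! ### restr facts -/

lemma restr_apply (x : ℕ →₀ ℝ) (E : Finset ℕ) (n : ℕ) :
    restr x E n = if n ∈ E then x n else 0 := by
  simp [restr, Finsupp.filter_apply]

lemma restr_support (x : ℕ →₀ ℝ) (E : Finset ℕ) :
    (restr x E).support = x.support ∩ E := by
  ext n; simp [restr, Finsupp.support_filter, Finset.mem_filter, Finset.mem_inter]

lemma restr_restr (x : ℕ →₀ ℝ) (E F : Finset ℕ) :
    restr (restr x E) F = restr x (E ∩ F) := by
  ext n
  simp only [restr_apply, Finset.mem_inter]
  split_ifs <;> tauto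

lemma restr_eq_self {x : ℕ →₀ ℝ} {E : Finset ℕ} (h : x.support ⊆ E) : restr x E = x := by
  ext n
  rw [restr_apply]
  by_cases hn : n ∈ E
  · simp [hn]
  · simp only [hn, if_false]
    by_contra hne
    exact hn (h (Finsupp.mem_support_iff.2 fun h0 => hne h0.symm))

lemma restr_eq_zero {x : ℕ →₀ ℝ} {E : Finset ℕ} (h : ∀ n ∈ x.support, n ∉ E) :
    restr x E = 0 := by
  ext n
  rw [restr_apply]
  by_cases hn : n ∈ E
  · simp only [hn, if_true]
    by_contra hne
    exact h n (Finsupp.mem_support_iff.2 hne) hn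
  · simp [hn]

lemma succ_disjoint {l : ℕ} {E : Fin l → Finset ℕ} (hE : Succ E) {i j : Fin l} (h : i ≠ j) :
    ∀ a ∈ E i, a ∉ E j := by
  intro a ha haj
  rcases lt_or_gt_of_ne h with h' | h'
  · exact lt_irrefl a (hE i j h' a ha a haj)
  · exact lt_irrefl a (hE j i h' a haj a ha)

/-! ### ℓ¹ bound -/

noncomputable def C (x : ℕ →₀ ℝ) : ℝ := ∑ n ∈ x.support, |x n|

lemma C_nonneg (x : ℕ →₀ ℝ) : 0 ≤ C x :=
  Finset.sum_nonneg fun _ _ => abs_nonneg _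

lemma abs_le_C (x : ℕ →₀ ℝ) (n : ℕ) : |x n| ≤ C x := by
  by_cases h : n ∈ x.support
  · exact Finset.single_le_sum (fun m _ => abs_nonneg (x m)) h
  · rw [Finsupp.notMem_support_iff.1 h]; simpa using C_nonneg x

lemma sup0_bdd (x : ℕ →₀ ℝ) : BddAbove (Set.range fun n => |x n|) :=
  ⟨C x, by rintro _ ⟨n, rfl⟩; exact abs_le_C x n⟩

lemma sup0_nonneg (x : ℕ →₀ ℝ) : 0 ≤ ⨆ n, |x n| :=
  Real.iSup_nonneg fun n => abs_nonneg _

lemma sup0_le_C (x : ℕ →₀ ℝ) : (⨆ n, |x n|) ≤ C x :=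
  Real.iSup_le (abs_le_C x) (C_nonneg x)

lemma le_sup0 (x : ℕ →₀ ℝ) (n : ℕ) : |x n| ≤ ⨆ m, |x m| :=
  le_ciSup (sup0_bdd x) n

lemma C_restr (x : ℕ →₀ ℝ) (E : Finset ℕ) :
    C (restr x E) = ∑ n ∈ x.support ∩ E, |x n| := by
  rw [C, restr_support]
  apply Finset.sum_congr rfl
  intro n hn
  rw [restr_apply, if_pos (Finset.mem_inter.1 hn).2]

lemma sum_C_restr_le {l : ℕ} (x : ℕ →₀ ℝ) {E : Fin l → Finset ℕ} (hE : Succ E) :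
    ∑ i, C (restr x (E i)) ≤ C x := by
  have h1 : ∀ i : Fin l, C (restr x (E i)) = ∑ n ∈ x.support ∩ E i, |x n| :=
    fun i => C_restr x (E i)
  simp only [h1]
  rw [← Finset.sum_biUnion]
  · apply Finset.sum_le_sum_of_subset_of_nonneg
    · intro n hn
      rcases Finset.mem_biUnion.1 hn with ⟨i, _, hni⟩
      exact (Finset.mem_inter.1 hni).1
    · intro n _ _; exact abs_nonneg _
  · intro i _ j _ hij
    apply Finset.disjoint_left.2
    intro a hai haj
    exact succ_disjoint hE hij a (Finset.mem_inter.1 hai).2 (Finset.mem_inter.1 haj).2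

/-! ### normK facts -/

lemma normK_nonneg : ∀ (k : ℕ) (x : ℕ →₀ ℝ), 0 ≤ normK k x
  | 0, x => sup0_nonneg x
  | k + 1, x => by
    apply Real.iSup_nonneg; intro l
    apply Real.iSup_nonneg; intro E
    split_ifs with h
    · exact mul_nonneg (div_nonneg zero_le_one (f_pos (by omega)).le)
        (Finset.sum_nonneg fun i _ => normK_nonneg k _)
    · exact le_refl 0

lemma normK_term_le_C (k l : ℕ) (x : ℕ →₀ ℝ) (E : Fin (l + 1) → Finset ℕ)
    (hC : ∀ y : ℕ →₀ ℝ, normK k y ≤ C y) :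
    (if Succ E then (1 / f (l + 1)) * ∑ i, normK k (restr x (E i)) else 0) ≤ C x := by
  split_ifs with h
  · calc (1 / f (l + 1)) * ∑ i, normK k (restr x (E i))
        ≤ ∑ i, normK k (restr x (E i)) :=
          mul_le_of_le_one_left (Finset.sum_nonneg fun i _ => normK_nonneg k _)
            (inv_f_le_one (by omega))
      _ ≤ ∑ i, C (restr x (E i)) := Finset.sum_le_sum fun i _ => hC _
      _ ≤ C x := sum_C_restr_le x h
  · exact C_nonneg x

lemma normK_le_C : ∀ (k : ℕ) (x : ℕ →₀ ℝ), normK k x ≤ C x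
  | 0, x => sup0_le_C x
  | k + 1, x => by
    apply Real.iSup_le _ (C_nonneg x); intro l
    apply Real.iSup_le _ (C_nonneg x); intro E
    exact normK_term_le_C k l x E (normK_le_C k)

lemma le_normK_succ_term {k l : ℕ} {x : ℕ →₀ ℝ} {E : Fin (l + 1) → Finset ℕ} (hE : Succ E) :
    (1 / f (l + 1)) * ∑ i, normK k (restr x (E i)) ≤ normK (k + 1) x := by
  have hb1 : BddAbove (Set.range fun E' : Fin (l + 1) → Finset ℕ =>
      if Succ E' then (1 / f (l + 1)) * ∑ i, normK k (restr x (E' i)) else 0) :=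
    ⟨C x, by rintro _ ⟨E', rfl⟩; exact normK_term_le_C k l x E' (normK_le_C k)⟩
  have h1 : (1 / f (l + 1)) * ∑ i, normK k (restr x (E i)) ≤
      ⨆ E' : Fin (l + 1) → Finset ℕ,
        if Succ E' then (1 / f (l + 1)) * ∑ i, normK k (restr x (E' i)) else 0 := by
    have := le_ciSup hb1 E
    rwa [if_pos hE] at this
  have hb2 : BddAbove (Set.range fun l' : ℕ => ⨆ E' : Fin (l' + 1) → Finset ℕ,
      if Succ E' then (1 / f (l' + 1)) * ∑ i, normK k (restr x (E' i)) else 0) :=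
    ⟨C x, by
      rintro _ ⟨l', rfl⟩
      exact Real.iSup_le (fun E' => normK_term_le_C k l' x E' (normK_le_C k)) (C_nonneg x)⟩
  have h2 := le_ciSup hb2 l
  exact le_trans h1 h2

lemma succ_single (s : Finset ℕ) : Succ (fun _ : Fin 1 => s) := by
  intro i j hij
  exact absurd hij (by omega)

lemma f_one : f 1 = 1 := by
  have h4 : ((1:ℕ):ℝ) + 1 = 2 := by norm_num
  rw [f, h4]
  exact Real.logb_self_eq_one (by norm_num)

lemma normK_le_succ (k : ℕ) (x : ℕ →₀ ℝ) : normK k x ≤ normK (k + 1) x := by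
  have h := le_normK_succ_term (k := k) (l := 0) (x := x)
      (E := fun _ : Fin 1 => x.support) (succ_single _)
  norm_num [f_one, restr_eq_self (le_refl x.support)] at h
  exact h

lemma normK_mono {k m : ℕ} (h : k ≤ m) (x : ℕ →₀ ℝ) : normK k x ≤ normK m x := by
  induction m with
  | zero => simp_all
  | succ m ih =>
    rcases Nat.lt_or_ge k (m + 1) with h' | h'
    · exact le_trans (ih (by omega)) (normK_le_succ m x)
    · have : k = m + 1 := by omega
      simp [this]

lemma normK_restr_le : ∀ (k : ℕ) (x : ℕ →₀ ℝ) (E : Finset ℕ),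
    normK k (restr x E) ≤ normK k x
  | 0, x, E => by
    apply ciSup_mono (sup0_bdd x)
    intro n
    rw [restr_apply]
    split_ifs
    · exact le_refl _
    · simp
  | k + 1, x, E => by
    apply Real.iSup_le _ (normK_nonneg _ x); intro l
    apply Real.iSup_le _ (normK_nonneg _ x); intro F
    split_ifs with h
    · have heq : ∀ i : Fin (l + 1), restr (restr x E) (F i) = restr x (E ∩ F i) :=
        fun i => restr_restr x E (F i)
      simp only [heq]
      have hS : Succ (fun i : Fin (l + 1) => E ∩ F i) := by
        intro i j hij a ha b hb
        exact h i j hij a (Finset.mem_inter.1 ha).2 b (Finset.mem_inter.1 hb).2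
      exact le_normK_succ_term hS
    · exact normK_nonneg _ x

/-! ### S facts -/

lemma S_bdd (x : ℕ →₀ ℝ) : BddAbove (Set.range fun k => normK k x) :=
  ⟨C x, by rintro _ ⟨k, rfl⟩; exact normK_le_C k x⟩

lemma normK_le_S (k : ℕ) (x : ℕ →₀ ℝ) : normK k x ≤ S x :=
  le_ciSup (S_bdd x) k

lemma S_nonneg (x : ℕ →₀ ℝ) : 0 ≤ S x :=
  Real.iSup_nonneg fun k => normK_nonneg k x

lemma S_le_C (x : ℕ →₀ ℝ) : S x ≤ C x :=
  Real.iSup_le (fun k => normK_le_C k x) (C_nonneg x)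

lemma S_zero : S 0 = 0 := by
  have h1 := S_le_C 0
  have h2 := S_nonneg 0
  have : C 0 = 0 := by simp [C]
  linarith

lemma sum_S_restr_le {l : ℕ} (x : ℕ →₀ ℝ) {E : Fin (l + 1) → Finset ℕ} (hE : Succ E) :
    ∑ i, S (restr x (E i)) ≤ f (l + 1) * S x := by
  apply le_of_forall_pos_le_add
  intro ε hε
  set δ := ε / (l + 1) with hδdef
  have hδ : 0 < δ := by positivity
  have hchoice : ∀ i : Fin (l + 1), ∃ k, S (restr x (E i)) - δ < normK k (restr x (E i)) := by
    intro i
    apply exists_lt_of_lt_ciSup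
    show S (restr x (E i)) - δ < S (restr x (E i))
    linarith
  choose K hK using hchoice
  set M := Finset.univ.sup K with hM
  have hKM : ∀ i, normK (K i) (restr x (E i)) ≤ normK M (restr x (E i)) :=
    fun i => normK_mono (Finset.le_sup (Finset.mem_univ i)) _
  have h1 : ∑ i, S (restr x (E i)) ≤ (∑ i, normK M (restr x (E i))) + (l + 1) * δ := by
    have : ∀ i : Fin (l + 1), S (restr x (E i)) ≤ normK M (restr x (E i)) + δ := by
      intro i; have := hK i; have := hKM i; linarith
    calc ∑ i, S (restr x (E i)) ≤ ∑ i : Fin (l + 1), (normK M (restr x (E i)) + δ) :=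
          Finset.sum_le_sum fun i _ => this i
      _ = (∑ i, normK M (restr x (E i))) + (l + 1) * δ := by
          rw [Finset.sum_add_distrib]
          simp [Finset.card_univ]
  have h2 : ∑ i, normK M (restr x (E i)) ≤ f (l + 1) * normK (M + 1) x := by
    have h3 := le_normK_succ_term (k := M) (x := x) hE
    have hf := f_pos (show 1 ≤ l + 1 by omega)
    rw [div_mul_eq_mul_div, one_mul, div_le_iff₀ hf] at h3
    linarith [h3]
  have h4 : normK (M + 1) x ≤ S x := normK_le_S _ x
  have hf1 : 1 ≤ f (l + 1) := f_one_le (by omega)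
  have h5 : ((l : ℝ) + 1) * δ = ε := by
    rw [hδdef]; field_simp
  calc ∑ i, S (restr x (E i)) ≤ (∑ i, normK M (restr x (E i))) + (l + 1) * δ := h1
    _ ≤ f (l + 1) * normK (M + 1) x + (l + 1) * δ := by linarith
    _ ≤ f (l + 1) * S x + (l + 1) * δ := by nlinarith
    _ = f (l + 1) * S x + ε := by rw [h5]

/-! ### generic RHS sup machinery -/

noncomputable def RHSsup (G : (ℕ →₀ ℝ) → ℝ) (x : ℕ →₀ ℝ) : ℝ :=
  ⨆ l : ℕ, ⨆ E : Fin l → Finset ℕ,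
    if 2 ≤ l ∧ Succ E then (1 / f l) * ∑ i, G (restr x (E i)) else 0

lemma implicitRHS_eq (N : (ℕ →₀ ℝ) → ℝ) (x : ℕ →₀ ℝ) :
    implicitRHS N x = max (⨆ n, |x n|) (RHSsup N x) := rfl

section Generic
variable {G : (ℕ →₀ ℝ) → ℝ} (hGC : ∀ y, G y ≤ C y) (hG0 : ∀ y, 0 ≤ G y)
include hGC hG0

lemma RHS_term_le_C (x : ℕ →₀ ℝ) (l : ℕ) (E : Fin l → Finset ℕ) :
    (if 2 ≤ l ∧ Succ E then (1 / f l) * ∑ i, G (restr x (E i)) else 0) ≤ C x := by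
  split_ifs with h
  · calc (1 / f l) * ∑ i, G (restr x (E i))
        ≤ ∑ i, G (restr x (E i)) :=
          mul_le_of_le_one_left (Finset.sum_nonneg fun i _ => hG0 _)
            (inv_f_le_one (by omega))
      _ ≤ ∑ i, C (restr x (E i)) := Finset.sum_le_sum fun i _ => hGC _
      _ ≤ C x := sum_C_restr_le x h.2
  · exact C_nonneg x

lemma le_RHSsup {x : ℕ →₀ ℝ} {l : ℕ} {E : Fin l → Finset ℕ} (h2 : 2 ≤ l) (hE : Succ E) :
    (1 / f l) * ∑ i, G (restr x (E i)) ≤ RHSsup G x := by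
  have hb1 : BddAbove (Set.range fun E' : Fin l → Finset ℕ =>
      if 2 ≤ l ∧ Succ E' then (1 / f l) * ∑ i, G (restr x (E' i)) else 0) :=
    ⟨C x, by rintro _ ⟨E', rfl⟩; exact RHS_term_le_C hGC hG0 x l E'⟩
  have h1 : (1 / f l) * ∑ i, G (restr x (E i)) ≤
      ⨆ E' : Fin l → Finset ℕ,
        if 2 ≤ l ∧ Succ E' then (1 / f l) * ∑ i, G (restr x (E' i)) else 0 := by
    have := le_ciSup hb1 E
    rwa [if_pos ⟨h2, hE⟩] at this
  have hb2 : BddAbove (Set.range fun l' : ℕ => ⨆ E' : Fin l' → Finset ℕ,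
      if 2 ≤ l' ∧ Succ E' then (1 / f l') * ∑ i, G (restr x (E' i)) else 0) :=
    ⟨C x, by
      rintro _ ⟨l', rfl⟩
      exact Real.iSup_le (fun E' => RHS_term_le_C hGC hG0 x l' E') (C_nonneg x)⟩
  exact le_trans h1 (le_ciSup hb2 l)

omit hGC hG0 in
lemma RHSsup_le {x : ℕ →₀ ℝ} {a : ℝ} (ha : 0 ≤ a)
    (h : ∀ (l : ℕ) (E : Fin l → Finset ℕ), 2 ≤ l → Succ E →
      (1 / f l) * ∑ i, G (restr x (E i)) ≤ a) :
    RHSsup G x ≤ a := by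
  apply Real.iSup_le _ ha; intro l
  apply Real.iSup_le _ ha; intro E
  split_ifs with hc
  · exact h l E hc.1 hc.2
  · exact ha

end Generic

/-! ### S satisfies the implicit bounds -/

lemma RHSsup_S_le_S (x : ℕ →₀ ℝ) : RHSsup S x ≤ S x := by
  apply RHSsup_le (S_nonneg x)
  intro l E h2 hE
  match l, h2 with
  | (m + 1), _ =>
    have h := sum_S_restr_le (l := m) x hE
    have hf := f_pos (show 1 ≤ m + 1 by omega)
    rw [div_mul_eq_mul_div, one_mul, div_le_iff₀ hf]
    linarith

lemma normK_le_implicit (x : ℕ →₀ ℝ) :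
    ∀ k, normK k x ≤ max (⨆ n, |x n|) (RHSsup S x) := by
  have hmax : 0 ≤ max (⨆ n, |x n|) (RHSsup S x) :=
    le_trans (sup0_nonneg x) (le_max_left _ _)
  intro k
  induction k with
  | zero => exact le_max_left _ _
  | succ k ih =>
    apply Real.iSup_le _ hmax; intro l
    apply Real.iSup_le _ hmax; intro E
    split_ifs with hE
    · match l with
      | 0 =>
        have h1 : (1 / f (0 + 1)) * ∑ i : Fin 1, normK k (restr x (E i))
            = normK k (restr x (E 0)) := by
          norm_num [f_one, Fin.sum_univ_one]
        rw [h1]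
        exact le_trans (normK_restr_le k x (E 0)) ih
      | (m + 1) =>
        have h2 : (1 / f (m + 1 + 1)) * ∑ i, normK k (restr x (E i))
            ≤ (1 / f (m + 1 + 1)) * ∑ i, S (restr x (E i)) := by
          apply mul_le_mul_of_nonneg_left
          · exact Finset.sum_le_sum fun i _ => normK_le_S k _
          · exact div_nonneg zero_le_one (f_pos (by omega)).le
        refine le_trans h2 (le_trans (le_RHSsup S_le_C S_nonneg (by omega) hE)
          (le_max_right _ _))
    · exact hmax

lemma S_le_max (x : ℕ →₀ ℝ) : S x ≤ max (⨆ n, |x n|) (RHSsup S x) :=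
  Real.iSup_le (normK_le_implicit x)
    (le_trans (sup0_nonneg x) (le_max_left _ _))

lemma sup0_le_S (x : ℕ →₀ ℝ) : (⨆ n, |x n|) ≤ S x := normK_le_S 0 x

theorem stmt10 (N : (ℕ →₀ ℝ) → ℝ)
    (Nadd : ∀ x y : ℕ →₀ ℝ, N (x + y) ≤ N x + N y)
    (Nsmul : ∀ (a : ℝ) (x : ℕ →₀ ℝ), N (a • x) = |a| * N x)
    (Ndef : ∀ x : ℕ →₀ ℝ, N x = 0 → x = 0)
    (Nunit : ∀ i : ℕ, N (Finsupp.single i 1) = 1)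
    (Neq : ∀ x : ℕ →₀ ℝ, N x = implicitRHS N x) :
    ∀ x : ℕ →₀ ℝ, N x = S x := by
  have Nzero : N 0 = 0 := by
    have h := Nsmul 0 0
    simpa using h
  have Nnonneg : ∀ x, 0 ≤ N x := by
    intro x
    have h1 := Nadd x ((-1 : ℝ) • x)
    have h2 := Nsmul (-1) x
    have h3 : x + (-1 : ℝ) • x = 0 := by
      rw [neg_one_smul]; exact add_neg_cancel x
    rw [h3, Nzero] at h1
    rw [h2] at h1
    simp only [abs_neg, abs_one, one_mul] at h1
    linarith
  have NC : ∀ x, N x ≤ C x := by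
    have hsum : ∀ s : Finset ℕ, ∀ g : ℕ → ℕ →₀ ℝ, N (∑ n ∈ s, g n) ≤ ∑ n ∈ s, N (g n) := by
      intro s
      induction s using Finset.induction with
      | empty => intro g; simp [Nzero]
      | insert a s h ih =>
        intro g
        rw [Finset.sum_insert h, Finset.sum_insert h]
        exact le_trans (Nadd _ _) (by linarith [ih g])
    intro x
    have hx : x = ∑ n ∈ x.support, Finsupp.single n (x n) := by
      have := Finsupp.sum_single x
      rw [Finsupp.sum] at this
      exact this.symm
    calc N x = N (∑ n ∈ x.support, Finsupp.single n (x n)) := by rw [← hx]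
      _ ≤ ∑ n ∈ x.support, N (Finsupp.single n (x n)) := hsum _ _
      _ = ∑ n ∈ x.support, |x n| := by
          apply Finset.sum_congr rfl
          intro n _
          have h1 : Finsupp.single n (x n) = (x n) • Finsupp.single n (1 : ℝ) := by
            rw [Finsupp.smul_single', mul_one]
          rw [h1, Nsmul, Nunit, mul_one]
      _ = C x := rfl
  have NmaxEq : ∀ x, N x = max (⨆ n, |x n|) (RHSsup N x) := fun x => by
    rw [Neq x, implicitRHS_eq]
  have sup0_le_N : ∀ x, (⨆ n, |x n|) ≤ N x := fun x => by
    rw [NmaxEq x]; exact le_max_left _ _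
  have RHS_le_N : ∀ x, RHSsup N x ≤ N x := fun x => by
    rw [NmaxEq x]; exact le_max_right _ _
  suffices H : ∀ n : ℕ, ∀ x : ℕ →₀ ℝ, x.support.card = n → N x = S x by
    intro x; exact H _ x rfl
  intro n
  induction n using Nat.strong_induction_on with
  | _ n IH =>
  intro x hcard
  by_cases hx0 : x = 0
  · rw [hx0, Nzero, S_zero]
  have keyIH : ∀ (l : ℕ) (E : Fin l → Finset ℕ), Succ E → (¬ ∃ i₀, x.support ⊆ E i₀) →
      ∀ i : Fin l, N (restr x (E i)) = S (restr x (E i)) := by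
    intro l E hE hfull i
    push_neg at hfull
    have hss : (restr x (E i)).support ⊂ x.support := by
      rw [restr_support]
      refine Finset.ssubset_iff_subset_ne.2 ⟨Finset.inter_subset_left, ?_⟩
      intro heq
      exact hfull i fun a ha => (Finset.mem_inter.1 (heq ▸ ha)).2
    exact IH _ (hcard ▸ Finset.card_lt_card hss) _ rfl
  have hzeroj : ∀ (l : ℕ) (E : Fin l → Finset ℕ), Succ E → ∀ i₀ : Fin l, x.support ⊆ E i₀ →
      ∀ j, j ≠ i₀ → restr x (E j) = 0 := by
    intro l E hE i₀ hi₀ j hj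
    exact restr_eq_zero fun nn hn => succ_disjoint hE (Ne.symm hj) nn (hi₀ hn)
  have hf2 := f_two_gt_one
  have hf2pos : (0:ℝ) < f 2 := by linarith
  have h12 : ∀ l : ℕ, 2 ≤ l → 1 / f l ≤ 1 / f 2 := by
    intro l h2
    exact one_div_le_one_div_of_le hf2pos (f_mono (by norm_num) h2)
  have keyN : ∀ (l : ℕ) (E : Fin l → Finset ℕ), 2 ≤ l → Succ E →
      (1 / f l) * ∑ i, N (restr x (E i)) ≤ max (S x) ((1 / f 2) * N x) := by
    intro l E h2 hE
    by_cases hfull : ∃ i₀, x.support ⊆ E i₀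
    · rcases hfull with ⟨i₀, hi₀⟩
      have hsum : ∑ i, N (restr x (E i)) = N x := by
        rw [Finset.sum_eq_single i₀
          (fun j _ hj => by rw [hzeroj l E hE i₀ hi₀ j hj, Nzero]) (by simp)]
        rw [restr_eq_self hi₀]
      rw [hsum]
      exact le_trans (mul_le_mul_of_nonneg_right (h12 l h2) (Nnonneg x)) (le_max_right _ _)
    · have heq : ∑ i, N (restr x (E i)) = ∑ i, S (restr x (E i)) :=
        Finset.sum_congr rfl fun i _ => keyIH l E hE hfull i
      rw [heq]
      exact le_trans (le_trans (le_RHSsup S_le_C S_nonneg h2 hE) (RHSsup_S_le_S x))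
        (le_max_left _ _)
  have keyS : ∀ (l : ℕ) (E : Fin l → Finset ℕ), 2 ≤ l → Succ E →
      (1 / f l) * ∑ i, S (restr x (E i)) ≤ max (N x) ((1 / f 2) * S x) := by
    intro l E h2 hE
    by_cases hfull : ∃ i₀, x.support ⊆ E i₀
    · rcases hfull with ⟨i₀, hi₀⟩
      have hsum : ∑ i, S (restr x (E i)) = S x := by
        rw [Finset.sum_eq_single i₀
          (fun j _ hj => by rw [hzeroj l E hE i₀ hi₀ j hj, S_zero]) (by simp)]
        rw [restr_eq_self hi₀]
      rw [hsum]
      exact le_trans (mul_le_mul_of_nonneg_right (h12 l h2) (S_nonneg x)) (le_max_right _ _)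
    · have heq : ∑ i, S (restr x (E i)) = ∑ i, N (restr x (E i)) :=
        Finset.sum_congr rfl fun i _ => (keyIH l E hE hfull i).symm
      rw [heq]
      exact le_trans (le_trans (le_RHSsup NC Nnonneg h2 hE) (RHS_le_N x)) (le_max_left _ _)
  have hNle : N x ≤ max (S x) ((1 / f 2) * N x) := by
    calc N x = max (⨆ n, |x n|) (RHSsup N x) := NmaxEq x
      _ ≤ max (S x) ((1 / f 2) * N x) :=
        max_le (le_trans (sup0_le_S x) (le_max_left _ _))
          (RHSsup_le (le_trans (S_nonneg x) (le_max_left _ _)) keyN)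
  have hSle : S x ≤ max (N x) ((1 / f 2) * S x) := by
    refine le_trans (S_le_max x) (max_le ?_ ?_)
    · exact le_trans (sup0_le_N x) (le_max_left _ _)
    · exact RHSsup_le (le_trans (Nnonneg x) (le_max_left _ _)) keyS
  have hf2' : 1 / f 2 < 1 := by
    rw [div_lt_one hf2pos]; exact hf2
  have h1 : N x ≤ S x := by
    rcases le_max_iff.1 hNle with h | h
    · exact h
    · nlinarith [Nnonneg x, S_nonneg x]
  have h2 : S x ≤ N x := by
    rcases le_max_iff.1 hSle with h | h
    · exact h
    · nlinarith [Nnonneg x, S_nonneg x]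
  linarith
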